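/- Let 0 < ε, c < 1 be constants, M ≤ 2^{(1−ε)L}, K ≤ cε√M. Then every M-subset W of {0,1}^L satisfies |B_K(W)| ≥ ((1−c²)/K^K)·binom(εML, K), and consequently any K-substitution code C satisfies r(C) ≥ K·log(ML) − 2K·log K − O(K). -/

import Mathlib

/-
Harper's edge-isoperimetric inequality bounds the number of hypercube edges inside a set `W` of
`M` words by `M log₂ M`, so when `M ≤ 2^((1-ε)L)` at least `εML` directed edges leave `W`.
Moving the sources of `K` boundary edges to their targets yields an element of the `K`-ball as
soon as the edges have distinct sources and distinct targets. Each edge clashes with at most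
`2(L-1)` others, so for `K ≤ cε√M` at least a `1 - c²` fraction of the `K`-sets of boundary edges
are clash-free; and each ball element comes from at most `K^K` of them, because it determines the
sources and the targets and only the matching between them is free. For the redundancy, disjoint
balls consist of sets of size at most `M`, of which there are at most `2·binom(2^L, M)` once
`4M ≤ 2^L`; if instead `εL < 2`, the bound holds trivially.
-/

/-- The `K`-substitution ball of a word `W`. -/
def subBall (L K : ℕ) (W : Finset (Fin L → Bool)) : Set (Finset (Fin L → Bool)) :=
  {V | ∃ g : (Fin L → Bool) → (Fin L → Bool),
    (∑ x ∈ W, hammingDist x (g x)) ≤ K ∧ V = W.image g}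

/-- The generalized binomial coefficient `x choose K` for a real `x`. -/
noncomputable def realChoose (x : ℝ) (K : ℕ) : ℝ :=
  (∏ i ∈ Finset.range K, (x - i)) / (K.factorial : ℝ)

open Finset Real

lemma self_le_logb_two_one_add {t : ℝ} (h0 : 0 ≤ t) (h1 : t ≤ 1) : t ≤ logb 2 (1 + t) := by
  rw [le_logb_iff_rpow_le one_lt_two (by linarith)]
  simpa [one_add_one_eq_two] using rpow_one_add_le_one_add_mul_self (s := 1) (by norm_num) h0 h1

lemma mul_logb_add_mul_logb_add_two_mul_le {a b : ℝ} (ha : 0 ≤ a) (hab : a ≤ b) :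
    a * logb 2 a + b * logb 2 b + 2 * a ≤ (a + b) * logb 2 (a + b) := by
  rcases ha.eq_or_lt with rfl | ha
  · simp
  have hb : 0 < b := ha.trans_le hab
  have h₁ : 1 + logb 2 a ≤ logb 2 (a + b) := by
    rw [← logb_self_eq_one one_lt_two, ← logb_mul two_ne_zero ha.ne']
    exact logb_le_logb_of_le one_lt_two (by positivity) (by linarith)
  have h₂ : a / b ≤ logb 2 (a + b) - logb 2 b := by
    rw [← logb_div (by positivity) hb.ne', add_div, div_self hb.ne', add_comm]
    exact self_le_logb_two_one_add (by positivity) ((div_le_one hb).2 hab)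
  rw [div_le_iff₀ hb] at h₂
  nlinarith [mul_le_mul_of_nonneg_left h₁ ha.le]

lemma mul_logb_add_mul_logb_add_two_mul_min_le {a b : ℝ} (ha : 0 ≤ a) (hb : 0 ≤ b) :
    a * logb 2 a + b * logb 2 b + 2 * min a b ≤ (a + b) * logb 2 (a + b) := by
  rcases le_total a b with h | h
  · simpa [min_eq_left h] using mul_logb_add_mul_logb_add_two_mul_le ha h
  · rw [min_eq_right h, add_comm a b]
    linarith [mul_logb_add_mul_logb_add_two_mul_le hb h]

lemma Nat.mul_sub_one_mul_choose_sub_two (n : ℕ) {K : ℕ} (hK : 2 ≤ K) :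
    n * (n - 1) * (n - 2).choose (K - 2) = K * (K - 1) * n.choose K := by
  obtain ⟨k, rfl⟩ := Nat.exists_eq_add_of_le' hK
  rcases lt_or_ge n 2 with hn | hn
  · interval_cases n <;> simp [Nat.choose_eq_zero_of_lt]
  obtain ⟨m, rfl⟩ := Nat.exists_eq_add_of_le' hn
  have h₁ := Nat.add_one_mul_choose_eq m k
  have h₂ := Nat.add_one_mul_choose_eq (m + 1) (k + 1)
  simp only [Nat.add_sub_cancel]
  calc (m + 2) * (m + 1) * m.choose k = (m + 2) * ((m + 1) * m.choose k) := by ring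
    _ = (m + 1 + 1) * (m + 1).choose (k + 1) * (k + 1) := by rw [h₁]; ring
    _ = (k + 2) * (k + 1) * (m + 2).choose (k + 2) := by rw [h₂]; ring

lemma Nat.sum_range_choose_le_two_mul_choose {N M : ℕ} (h : 4 * M ≤ N) :
    ∑ m ∈ range (M + 1), N.choose m ≤ 2 * N.choose M := by
  induction M with
  | zero => simp
  | succ M ih =>
    have hstep : 2 * N.choose M ≤ N.choose (M + 1) := by
      refine Nat.le_of_mul_le_mul_right ?_ M.succ_pos
      rw [Nat.choose_succ_right_eq]
      calc 2 * N.choose M * (M + 1) = N.choose M * (2 * (M + 1)) := by ring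
        _ ≤ N.choose M * (N - M) := Nat.mul_le_mul_left _ (by omega)
    rw [sum_range_succ]
    have := ih (by omega)
    omega

lemma Finset.card_filter_powersetCard_mem_and_mem_le {α : Type*} [DecidableEq α] {s : Finset α}
    {a b : α} (ha : a ∈ s) (hb : b ∈ s) (hab : a ≠ b) (K : ℕ) :
    #((powersetCard K s).filter fun S => a ∈ S ∧ b ∈ S) ≤ (#s - 2).choose (K - 2) := by
  calc #((powersetCard K s).filter fun S => a ∈ S ∧ b ∈ S)
      ≤ #(powersetCard (K - 2) ((s.erase a).erase b)) := by
        refine card_le_card_of_injOn (fun S => (S.erase a).erase b) (fun S hS => ?_)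
          (fun S₁ h₁ S₂ h₂ h => ?_)
        · obtain ⟨hS, haS, hbS⟩ := mem_filter.1 hS
          obtain ⟨hSs, hSK⟩ := mem_powersetCard.1 hS
          refine mem_powersetCard.2 ⟨erase_subset_erase _ (erase_subset_erase _ hSs), ?_⟩
          rw [card_erase_of_mem (mem_erase.2 ⟨hab.symm, hbS⟩), card_erase_of_mem haS, hSK]
          rfl
        · obtain ⟨-, ha₁, hb₁⟩ := mem_filter.1 h₁
          obtain ⟨-, ha₂, hb₂⟩ := mem_filter.1 h₂
          rw [← insert_erase ha₁, ← insert_erase (mem_erase.2 ⟨hab.symm, hb₁⟩),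
            ← insert_erase ha₂, ← insert_erase (mem_erase.2 ⟨hab.symm, hb₂⟩)]
          exact congrArg (insert a ∘ insert b) h
    _ = (#s - 2).choose (K - 2) := by
        rw [card_powersetCard, card_erase_of_mem (mem_erase.2 ⟨hab.symm, hb⟩),
          card_erase_of_mem ha]
        rfl

lemma realChoose_natCast (n K : ℕ) : realChoose n K = n.choose K := by
  rw [realChoose, Nat.cast_choose_eq_descPochhammer_div, descPochhammer_eval_eq_prod_range]

lemma realChoose_pos {K : ℕ} {x : ℝ} (hx : (K : ℝ) - 1 < x) : 0 < realChoose x K := by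
  refine div_pos (prod_pos fun i hi => ?_) (by exact_mod_cast K.factorial_pos)
  have : (i : ℝ) + 1 ≤ K := by exact_mod_cast mem_range.1 hi
  linarith

lemma realChoose_le_realChoose {K : ℕ} {x y : ℝ} (hx : (K : ℝ) - 1 ≤ x) (hxy : x ≤ y) :
    realChoose x K ≤ realChoose y K := by
  unfold realChoose
  gcongr
  intro i hi
  have : (i : ℝ) + 1 ≤ K := by exact_mod_cast mem_range.1 hi
  linarith

lemma div_pow_le_realChoose {K : ℕ} {x y : ℝ} (hy : 0 ≤ y) (hyx : y + K ≤ x) :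
    (y / K) ^ K ≤ realChoose x K := by
  rw [div_pow, realChoose]
  calc y ^ K / (K : ℝ) ^ K ≤ y ^ K / K.factorial := by
        gcongr
        exact_mod_cast K.factorial_le_pow
    _ = (∏ _i ∈ range K, y) / K.factorial := by rw [prod_const, card_range]
    _ ≤ (∏ i ∈ range K, (x - i)) / K.factorial := by
        gcongr with i hi
        have : (i : ℝ) ≤ K := by exact_mod_cast (mem_range.1 hi).le
        linarith

namespace SubstitutionCode

abbrev Word (L : ℕ) := Fin L → Bool

variable {L : ℕ}

/-! ### Edge isoperimetry in the hypercube -/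

def flipBit (x : Word L) (i : Fin L) : Word L := Function.update x i (!x i)

@[simp] lemma flipBit_apply_self (x : Word L) (i : Fin L) : flipBit x i i = !x i := by
  simp [flipBit]

lemma flipBit_apply_of_ne (x : Word L) {i j : Fin L} (h : j ≠ i) : flipBit x i j = x j :=
  Function.update_of_ne h _ _

@[simp] lemma flipBit_flipBit (x : Word L) (i : Fin L) : flipBit (flipBit x i) i = x := by
  ext j
  rcases eq_or_ne j i with rfl | h
  · simp
  · rw [flipBit_apply_of_ne _ h, flipBit_apply_of_ne _ h]

lemma flipBit_ne_self (x : Word L) (i : Fin L) : flipBit x i ≠ x :=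
  fun h => by simpa using congrFun h i

lemma flipBit_injective (x : Word L) : Function.Injective (flipBit x) := by
  intro i j h
  by_contra hij
  simpa [flipBit_apply_of_ne x hij] using congrFun h i

lemma hammingDist_flipBit (x : Word L) (i : Fin L) : hammingDist x (flipBit x i) = 1 := by
  rw [hammingDist, card_eq_one]
  refine ⟨i, eq_singleton_iff_unique_mem.2 ⟨by simp, fun j hj => ?_⟩⟩
  by_contra h
  exact (mem_filter.1 hj).2 (flipBit_apply_of_ne x h).symm

/-- A pair `(x, i)` stands for the directed hypercube edge from `x` to `flipBit x i`. -/
def innerEdges (W : Finset (Word L)) : Finset (Word L × Fin L) :=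
  (W ×ˢ univ).filter fun p => flipBit p.1 p.2 ∈ W

def boundaryEdges (W : Finset (Word L)) : Finset (Word L × Fin L) :=
  (W ×ˢ univ).filter fun p => flipBit p.1 p.2 ∉ W

lemma card_innerEdges_add_card_boundaryEdges (W : Finset (Word L)) :
    #(innerEdges W) + #(boundaryEdges W) = #W * L := by
  rw [innerEdges, boundaryEdges, card_filter_add_card_filter_not, card_product,
    card_univ, Fintype.card_fin]

lemma innerEdges_eq_empty_of_card_le_one {W : Finset (Word L)} (hW : #W ≤ 1) :
    innerEdges W = ∅ := by
  refine filter_eq_empty_iff.2 fun p hp hflip => flipBit_ne_self p.1 p.2 ?_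
  exact card_le_one.1 hW _ hflip _ (mem_product.1 hp).1

lemma card_filter_eq_add_card_filter_eq_not (s : Finset (Word L)) (i : Fin L) (b : Bool) :
    #(s.filter (· i = b)) + #(s.filter (· i = !b)) = #s := by
  rw [← card_filter_add_card_filter_not (s := s) (· i = b)]
  congr 2
  exact filter_congr fun x _ => by cases b <;> simp

lemma card_filter_flipBit_mem_le (W : Finset (Word L)) (i : Fin L) (b : Bool) :
    #((W.filter (flipBit · i ∈ W)).filter (· i = b)) ≤ #(W.filter (· i = !b)) := by
  refine card_le_card_of_injOn (flipBit · i) (fun x hx => ?_)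
    (fun x _ y _ h => by simpa using congrArg (flipBit · i) h)
  simp only [coe_filter, mem_filter] at hx
  simp [hx.1.2, hx.2]

lemma card_filter_flipBit_mem_le_two_mul_min (W : Finset (Word L)) (i : Fin L) (b : Bool) :
    #(W.filter (flipBit · i ∈ W)) ≤ 2 * min #(W.filter (· i = b)) #(W.filter (· i = !b)) := by
  have h₀ := card_filter_flipBit_mem_le W i b
  have h₁ := card_filter_flipBit_mem_le W i (!b)
  rw [Bool.not_not] at h₁
  set E := W.filter (flipBit · i ∈ W)
  have hE : ∀ b', #(E.filter (· i = b')) ≤ #(W.filter (· i = b')) :=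
    fun b' => card_le_card (filter_subset_filter _ (filter_subset _ _))
  have hsplit := card_filter_eq_add_card_filter_eq_not E i b
  have := hE b
  have := hE (!b)
  omega

/-- An inner edge of `W` either stays within one side of coordinate `i` or runs along `i`, and the
edges along `i` are matched with points of both sides. -/
lemma card_innerEdges_le_of_split (W : Finset (Word L)) (i : Fin L) (b : Bool) :
    #(innerEdges W) ≤ #(innerEdges (W.filter (· i = b))) + #(innerEdges (W.filter (· i = !b)))
      + 2 * min #(W.filter (· i = b)) #(W.filter (· i = !b)) := by
  have hcross := card_filter_flipBit_mem_le_two_mul_min W i b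
  set W₀ := W.filter (· i = b)
  set W₁ := W.filter (· i = !b)
  have hsub : innerEdges W ⊆ innerEdges W₀ ∪ innerEdges W₁ ∪
      (W.filter (flipBit · i ∈ W)) ×ˢ {i} := by
    rintro ⟨x, j⟩ hp
    simp only [innerEdges, mem_filter, mem_product, mem_univ, and_true] at hp
    rcases eq_or_ne j i with rfl | hj
    · simp [hp]
    · have hside : flipBit x j i = x i := flipBit_apply_of_ne x (Ne.symm hj)
      rcases Bool.eq_or_eq_not (x i) b with hb | hb <;>
        simp [W₀, W₁, innerEdges, hp, hb, hside]
  calc #(innerEdges W)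
      ≤ #(innerEdges W₀ ∪ innerEdges W₁ ∪ (W.filter (flipBit · i ∈ W)) ×ˢ {i}) :=
        card_le_card hsub
    _ ≤ #(innerEdges W₀) + #(innerEdges W₁) + #(W.filter (flipBit · i ∈ W)) := by
        grw [card_union_le, card_union_le, card_product, card_singleton, mul_one]
    _ ≤ _ := by omega

/-- Harper's edge-isoperimetric inequality for the hypercube. -/
theorem card_innerEdges_le (W : Finset (Word L)) : (#(innerEdges W) : ℝ) ≤ #W * logb 2 #W := by
  induction W using Finset.strongInduction with
  | H W ih =>
  rcases le_or_gt #W 1 with hW | hW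
  · rw [innerEdges_eq_empty_of_card_le_one hW]
    rcases Nat.le_one_iff_eq_zero_or_eq_one.1 hW with h | h <;> simp [h]
  obtain ⟨x, hx, y, hy, hxy⟩ := one_lt_card.1 hW
  obtain ⟨i, hi⟩ := Function.ne_iff.1 hxy
  set b := x i
  have h₀ : W.filter (· i = b) ⊂ W := filter_ssubset.2 ⟨y, hy, Ne.symm hi⟩
  have h₁ : W.filter (· i = !b) ⊂ W := filter_ssubset.2 ⟨x, hx, by simp [b]⟩
  have hcard : (#(W.filter (· i = b)) : ℝ) + #(W.filter (· i = !b)) = #W := by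
    exact_mod_cast card_filter_eq_add_card_filter_eq_not W i b
  calc (#(innerEdges W) : ℝ)
      ≤ #(innerEdges (W.filter (· i = b))) + #(innerEdges (W.filter (· i = !b)))
        + 2 * min (#(W.filter (· i = b)) : ℝ) #(W.filter (· i = !b)) := by
        exact_mod_cast card_innerEdges_le_of_split W i b
    _ ≤ #(W.filter (· i = b)) * logb 2 #(W.filter (· i = b))
        + #(W.filter (· i = !b)) * logb 2 #(W.filter (· i = !b))
        + 2 * min (#(W.filter (· i = b)) : ℝ) #(W.filter (· i = !b)) := by
        gcongr
        exacts [ih _ h₀, ih _ h₁]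
    _ ≤ #W * logb 2 #W := by
        rw [← hcard]
        exact mul_logb_add_mul_logb_add_two_mul_min_le (by positivity) (by positivity)

lemma card_boundaryEdges_ge (W : Finset (Word L)) :
    (#W : ℝ) * (L - logb 2 #W) ≤ #(boundaryEdges W) := by
  have hsum : (#(innerEdges W) : ℝ) + #(boundaryEdges W) = #W * L := by
    exact_mod_cast card_innerEdges_add_card_boundaryEdges W
  linarith [card_innerEdges_le W]

/-! ### Substituting along boundary edges -/

def target (p : Word L × Fin L) : Word L := flipBit p.1 p.2

lemma mem_boundaryEdges {W : Finset (Word L)} {p : Word L × Fin L} :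
    p ∈ boundaryEdges W ↔ p.1 ∈ W ∧ target p ∉ W := by
  simp [boundaryEdges, target]

/-- Sends the source of each edge of `S` to its target; when two edges of `S` share a
source, `Classical.choose` picks one of them. -/
noncomputable def applyEdges (S : Finset (Word L × Fin L)) (y : Word L) : Word L :=
  if h : ∃ p ∈ S, p.1 = y then target h.choose else y

def substitute (W : Finset (Word L)) (S : Finset (Word L × Fin L)) : Finset (Word L) :=
  (W \ S.image Prod.fst) ∪ S.image target

section applyEdges

variable {W : Finset (Word L)} {S : Finset (Word L × Fin L)}

lemma applyEdges_fst (hS : Set.InjOn Prod.fst (S : Set (Word L × Fin L)))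
    {p : Word L × Fin L} (hp : p ∈ S) : applyEdges S p.1 = target p := by
  have h : ∃ q ∈ S, q.1 = p.1 := ⟨p, hp, rfl⟩
  rw [applyEdges, dif_pos h, hS (mem_coe.2 h.choose_spec.1) hp h.choose_spec.2]

lemma applyEdges_of_notMem {y : Word L} (hy : y ∉ S.image Prod.fst) : applyEdges S y = y :=
  dif_neg fun ⟨p, hp, hpy⟩ => hy (mem_image.2 ⟨p, hp, hpy⟩)

lemma image_applyEdges (hS : Set.InjOn Prod.fst (S : Set (Word L × Fin L)))
    (hSW : S ⊆ boundaryEdges W) : W.image (applyEdges S) = substitute W S := by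
  ext y
  simp only [substitute, mem_union, mem_sdiff, mem_image]
  constructor
  · rintro ⟨x, hx, rfl⟩
    by_cases hxS : ∃ p ∈ S, p.1 = x
    · obtain ⟨p, hp, rfl⟩ := hxS
      exact .inr ⟨p, hp, (applyEdges_fst hS hp).symm⟩
    · rw [applyEdges_of_notMem (by simpa using hxS)]
      exact .inl ⟨hx, hxS⟩
  · rintro (⟨hy, hyS⟩ | ⟨p, hp, rfl⟩)
    · exact ⟨y, hy, applyEdges_of_notMem (by simpa using hyS)⟩
    · exact ⟨p.1, (mem_boundaryEdges.1 (hSW hp)).1, applyEdges_fst hS hp⟩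

lemma sum_hammingDist_applyEdges_le (hS : Set.InjOn Prod.fst (S : Set (Word L × Fin L))) :
    ∑ x ∈ W, hammingDist x (applyEdges S x) ≤ #S := by
  calc ∑ x ∈ W, hammingDist x (applyEdges S x)
      ≤ ∑ x ∈ W, if x ∈ S.image Prod.fst then 1 else 0 := by
        gcongr with x
        split_ifs with hx
        · obtain ⟨p, hp, rfl⟩ := mem_image.1 hx
          rw [applyEdges_fst hS hp, target, hammingDist_flipBit]
        · rw [applyEdges_of_notMem hx, hammingDist_self]
    _ = #(W.filter (· ∈ S.image Prod.fst)) := (card_filter _ _).symm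
    _ ≤ #(S.image Prod.fst) := card_le_card fun x hx => (mem_filter.1 hx).2
    _ ≤ #S := card_image_le

lemma substitute_mem_subBall {K : ℕ} (hS : Set.InjOn Prod.fst (S : Set (Word L × Fin L)))
    (hSW : S ⊆ boundaryEdges W) (hSK : #S ≤ K) : substitute W S ∈ subBall L K W :=
  ⟨applyEdges S, (sum_hammingDist_applyEdges_le hS).trans hSK, (image_applyEdges hS hSW).symm⟩

lemma sdiff_substitute (hSW : S ⊆ boundaryEdges W) : W \ substitute W S = S.image Prod.fst := by
  ext x
  simp only [substitute, mem_sdiff, mem_union, mem_image, not_or, not_and, not_not]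
  constructor
  · exact fun ⟨hx, hxS, _⟩ => hxS hx
  · rintro ⟨p, hp, rfl⟩
    have hp' := mem_boundaryEdges.1 (hSW hp)
    refine ⟨hp'.1, fun _ => ⟨p, hp, rfl⟩, ?_⟩
    rintro ⟨q, hq, hqp⟩
    exact (mem_boundaryEdges.1 (hSW hq)).2 (hqp ▸ hp'.1)

lemma substitute_sdiff (hSW : S ⊆ boundaryEdges W) : substitute W S \ W = S.image target := by
  ext y
  simp only [substitute, mem_sdiff, mem_union, mem_image]
  constructor
  · rintro ⟨⟨hy, -⟩ | hy, hyW⟩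
    exacts [absurd hy hyW, hy]
  · rintro ⟨p, hp, rfl⟩
    exact ⟨.inr ⟨p, hp, rfl⟩, (mem_boundaryEdges.1 (hSW hp)).2⟩

lemma eq_filter_applyEdges (hS : Set.InjOn Prod.fst (S : Set (Word L × Fin L))) :
    S = (S.image Prod.fst ×ˢ univ).filter fun p => applyEdges S p.1 = target p := by
  ext p
  simp only [mem_filter, mem_product, mem_univ, and_true]
  refine ⟨fun hp => ⟨mem_image_of_mem _ hp, applyEdges_fst hS hp⟩, ?_⟩
  rintro ⟨hp, happly⟩
  obtain ⟨q, hq, hqp⟩ := mem_image.1 hp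
  rw [← hqp, applyEdges_fst hS hq] at happly
  have : q.2 = p.2 := flipBit_injective q.1 (by rw [← target, happly, target, hqp])
  rwa [← Prod.ext hqp this]

end applyEdges

/-! ### Clash-free sets of boundary edges -/

def Clash (p q : Word L × Fin L) : Prop := p ≠ q ∧ (p.1 = q.1 ∨ target p = target q)

instance : DecidableRel (Clash (L := L)) := fun _ _ => inferInstanceAs (Decidable (_ ∧ _))

lemma Clash.symm {p q : Word L × Fin L} (h : Clash p q) : Clash q p :=
  ⟨h.1.symm, h.2.imp Eq.symm Eq.symm⟩

def goodSets (W : Finset (Word L)) (K : ℕ) : Finset (Finset (Word L × Fin L)) :=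
  (powersetCard K (boundaryEdges W)).filter fun S => ∀ p ∈ S, ∀ q ∈ S, ¬Clash p q

def badSets (W : Finset (Word L)) (K : ℕ) : Finset (Finset (Word L × Fin L)) :=
  (powersetCard K (boundaryEdges W)).filter fun S => ∃ p ∈ S, ∃ q ∈ S, Clash p q

section goodSets

variable {W : Finset (Word L)} {K : ℕ}

lemma card_goodSets_add_card_badSets :
    #(goodSets W K) + #(badSets W K) = (#(boundaryEdges W)).choose K := by
  rw [← card_powersetCard, ← card_filter_add_card_filter_not (s := powersetCard K _)
    (fun S => ∀ p ∈ S, ∀ q ∈ S, ¬Clash p q), goodSets, badSets]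
  simp only [not_forall, not_not, exists_prop]

section

variable {S : Finset (Word L × Fin L)}

lemma subset_boundaryEdges_of_mem_goodSets (hS : S ∈ goodSets W K) : S ⊆ boundaryEdges W :=
  (mem_powersetCard.1 (mem_filter.1 hS).1).1

lemma card_eq_of_mem_goodSets (hS : S ∈ goodSets W K) : #S = K :=
  (mem_powersetCard.1 (mem_filter.1 hS).1).2

lemma injOn_fst_of_mem_goodSets (hS : S ∈ goodSets W K) :
    Set.InjOn Prod.fst (S : Set (Word L × Fin L)) :=
  fun p hp q hq h => by_contra fun hpq => (mem_filter.1 hS).2 p hp q hq ⟨hpq, .inl h⟩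

lemma injOn_target_of_mem_goodSets (hS : S ∈ goodSets W K) :
    Set.InjOn target (S : Set (Word L × Fin L)) :=
  fun p hp q hq h => by_contra fun hpq => (mem_filter.1 hS).2 p hp q hq ⟨hpq, .inr h⟩

end

/-- A fibre of `substitute W` over `V` injects into the maps `W \ V → V \ W`, both sets having
`K` elements. -/
lemma card_filter_substitute_eq_le (V : Finset (Word L)) :
    #((goodSets W K).filter (substitute W · = V)) ≤ K ^ K := by
  set F := (goodSets W K).filter (substitute W · = V)
  rcases F.eq_empty_or_nonempty with hF | ⟨S₀, hS₀⟩
  · simp [hF]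
  have hsrc : ∀ S ∈ F, W \ V = S.image Prod.fst := fun S hS => by
    obtain ⟨hS, hSV⟩ := mem_filter.1 hS
    rw [← hSV, sdiff_substitute (subset_boundaryEdges_of_mem_goodSets hS)]
  have htgt : ∀ S ∈ F, V \ W = S.image target := fun S hS => by
    obtain ⟨hS, hSV⟩ := mem_filter.1 hS
    rw [← hSV, substitute_sdiff (subset_boundaryEdges_of_mem_goodSets hS)]
  have hinj : ∀ S ∈ F, Set.InjOn Prod.fst (S : Set (Word L × Fin L)) :=
    fun S hS => injOn_fst_of_mem_goodSets (mem_filter.1 hS).1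
  calc #F ≤ #((W \ V).pi fun _ => V \ W) := by
        refine card_le_card_of_injOn (fun S x _ => applyEdges S x) (fun S hS => ?_)
          (fun S₁ h₁ S₂ h₂ h => ?_)
        · rw [mem_coe] at hS
          rw [mem_coe, mem_pi]
          intro x hx
          rw [hsrc S hS] at hx
          obtain ⟨p, hp, rfl⟩ := mem_image.1 hx
          dsimp only
          rw [applyEdges_fst (hinj S hS) hp, htgt S hS]
          exact mem_image_of_mem _ hp
        · rw [mem_coe] at h₁ h₂
          rw [eq_filter_applyEdges (hinj S₁ h₁), eq_filter_applyEdges (hinj S₂ h₂),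
            ← hsrc S₁ h₁, ← hsrc S₂ h₂]
          refine filter_congr fun p hp => ?_
          have happly := congr_fun (congr_fun h p.1) (mem_product.1 hp).1
          dsimp only at happly
          rw [happly]
    _ = K ^ K := by
        have hgood := (mem_filter.1 hS₀).1
        rw [card_pi, prod_const, hsrc S₀ hS₀, htgt S₀ hS₀,
          card_image_of_injOn (injOn_fst_of_mem_goodSets hgood),
          card_image_of_injOn (injOn_target_of_mem_goodSets hgood), card_eq_of_mem_goodSets hgood]

lemma card_goodSets_le_pow_mul_ncard_subBall :
    #(goodSets W K) ≤ K ^ K * (subBall L K W).ncard := by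
  calc #(goodSets W K) ≤ K ^ K * #((goodSets W K).image (substitute W)) :=
        card_le_mul_card_image _ _ fun V _ => card_filter_substitute_eq_le V
    _ ≤ K ^ K * (subBall L K W).ncard := by
        rw [← Set.ncard_coe_finset]
        gcongr
        · exact Set.toFinite _
        · intro V hV
          obtain ⟨S, hS, rfl⟩ := mem_image.1 (mem_coe.1 hV)
          exact substitute_mem_subBall (injOn_fst_of_mem_goodSets hS)
            (subset_boundaryEdges_of_mem_goodSets hS) (card_eq_of_mem_goodSets hS).le

lemma card_filter_clash_le (W : Finset (Word L)) (p : Word L × Fin L) :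
    #((boundaryEdges W).filter (Clash p)) ≤ 2 * (L - 1) := by
  have hsub : (boundaryEdges W).filter (Clash p) ⊆
      ((univ.erase p.2).image fun j => (p.1, j)) ∪
        ((univ.erase p.2).image fun j => (flipBit (target p) j, j)) := by
    intro q hq
    obtain ⟨hpq, hshare⟩ := (mem_filter.1 hq).2
    have hq2 : q.2 ≠ p.2 := by
      intro h2
      refine hpq (Prod.ext ?_ h2.symm)
      rcases hshare with h | h
      · exact h
      · simpa [target, h2] using congrArg (flipBit · p.2) h
    have hj : q.2 ∈ univ.erase p.2 := mem_erase.2 ⟨hq2, mem_univ _⟩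
    rcases hshare with h | h
    · exact mem_union_left _ (mem_image.2 ⟨q.2, hj, Prod.ext h rfl⟩)
    · refine mem_union_right _ (mem_image.2 ⟨q.2, hj, Prod.ext ?_ rfl⟩)
      rw [h, target, flipBit_flipBit]
  calc #((boundaryEdges W).filter (Clash p)) ≤ (L - 1) + (L - 1) := by
        grw [card_le_card hsub, card_union_le, card_image_le, card_image_le,
          card_erase_of_mem (mem_univ _), card_univ, Fintype.card_fin]
    _ = 2 * (L - 1) := by ring

lemma card_clashingPairs_le (W : Finset (Word L)) :
    #((boundaryEdges W ×ˢ boundaryEdges W).filter fun pq => Clash pq.1 pq.2)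
      ≤ #(boundaryEdges W) * (2 * (L - 1)) := by
  rw [card_filter, sum_product]
  simp_rw [← card_filter]
  calc ∑ p ∈ boundaryEdges W, #((boundaryEdges W).filter (Clash p))
      ≤ ∑ _p ∈ boundaryEdges W, 2 * (L - 1) := sum_le_sum fun p _ => card_filter_clash_le W p
    _ = #(boundaryEdges W) * (2 * (L - 1)) := by rw [sum_const, smul_eq_mul]

/-- Double counting of (bad set, clashing ordered pair inside it); each bad set contains at least
two such pairs, `(p, q)` and `(q, p)`. -/
lemma card_badSets_mul_two_le :
    #(badSets W K) * 2
      ≤ #(boundaryEdges W) * (2 * (L - 1)) * (#(boundaryEdges W) - 2).choose (K - 2) := by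
  set P := (boundaryEdges W ×ˢ boundaryEdges W).filter fun pq => Clash pq.1 pq.2
  calc #(badSets W K) * 2 ≤ #P * (#(boundaryEdges W) - 2).choose (K - 2) := by
        refine card_mul_le_card_mul (fun S pq => pq.1 ∈ S ∧ pq.2 ∈ S) (fun S hS => ?_)
          (fun pq hP => ?_)
        · obtain ⟨hS, p, hp, q, hq, hpq⟩ := mem_filter.1 hS
          have hSG := (mem_powersetCard.1 hS).1
          refine one_lt_card.2 ⟨(p, q), ?_, (q, p), ?_, fun h => hpq.1 (congrArg Prod.fst h)⟩
          · simp [P, hSG hp, hSG hq, hpq, hp, hq]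
          · simp [P, hSG hp, hSG hq, hpq.symm, hp, hq]
        · obtain ⟨hpq, hclash⟩ := mem_filter.1 hP
          obtain ⟨hp, hq⟩ := mem_product.1 hpq
          refine (card_le_card fun S hS => ?_).trans
            (card_filter_powersetCard_mem_and_mem_le hp hq hclash.1 K)
          obtain ⟨hS, hmem⟩ := (mem_bipartiteBelow _).1 hS
          exact mem_filter.2 ⟨(mem_filter.1 hS).1, hmem⟩
    _ ≤ _ := Nat.mul_le_mul_right _ (card_clashingPairs_le W)

lemma badSets_eq_empty_of_lt_two (hK : K < 2) : badSets W K = ∅ := by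
  refine filter_eq_empty_iff.2 fun S hS ⟨p, hp, q, hq, hpq⟩ => hpq.1 ?_
  exact card_le_one.1 (by rw [(mem_powersetCard.1 hS).2]; omega) p hp q hq

theorem card_badSets_mul_le (W : Finset (Word L)) (K : ℕ) :
    #(badSets W K) * (#(boundaryEdges W) - 1)
      ≤ (L - 1) * (K * (K - 1)) * (#(boundaryEdges W)).choose K := by
  rcases lt_or_ge K 2 with hK | hK
  · simp [badSets_eq_empty_of_lt_two hK]
  set N := #(boundaryEdges W)
  have hbad : #(badSets W K) ≤ N * (L - 1) * (N - 2).choose (K - 2) := by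
    have := card_badSets_mul_two_le (W := W) (K := K)
    nlinarith
  calc #(badSets W K) * (N - 1) ≤ N * (L - 1) * (N - 2).choose (K - 2) * (N - 1) :=
        Nat.mul_le_mul_right _ hbad
    _ = (L - 1) * (N * (N - 1) * (N - 2).choose (K - 2)) := by ring
    _ = (L - 1) * (K * (K - 1)) * N.choose K := by
        rw [Nat.mul_sub_one_mul_choose_sub_two N hK]; ring

theorem choose_card_boundaryEdges_le_ncard_subBall {c2 : ℝ} (hK : 1 ≤ K) (hL : 1 ≤ L)
    (hN : 2 ≤ #(boundaryEdges W))
    (hclash : ((L : ℝ) - 1) * (K * (K - 1)) ≤ c2 * (#(boundaryEdges W) - 1)) :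
    (1 - c2) / K ^ K * (#(boundaryEdges W)).choose K ≤ (subBall L K W).ncard := by
  have hbad' := card_badSets_mul_le W K
  set N := #(boundaryEdges W)
  have hN1 : (0 : ℝ) < N - 1 := by
    have : (2 : ℝ) ≤ N := by exact_mod_cast hN
    linarith
  have hbad : (#(badSets W K) : ℝ) ≤ c2 * N.choose K := by
    have h : (#(badSets W K) : ℝ) * (N - 1) ≤ (L - 1) * (K * (K - 1)) * N.choose K := by
      rw [← Nat.cast_le (α := ℝ)] at hbad'
      push_cast [Nat.cast_sub (by omega : 1 ≤ N), Nat.cast_sub hL, Nat.cast_sub hK] at hbad'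
      exact hbad'
    refine le_of_mul_le_mul_right (h.trans ?_) hN1
    nlinarith [mul_le_mul_of_nonneg_right hclash (Nat.cast_nonneg (α := ℝ) (N.choose K))]
  have hgood : (1 - c2) * N.choose K ≤ #(goodSets W K) := by
    have : (#(goodSets W K) : ℝ) + #(badSets W K) = N.choose K := by
      exact_mod_cast card_goodSets_add_card_badSets
    linarith
  have hball : (#(goodSets W K) : ℝ) ≤ K ^ K * (subBall L K W).ncard := by
    exact_mod_cast card_goodSets_le_pow_mul_ncard_subBall
  rw [div_mul_eq_mul_div, div_le_iff₀ (by positivity)]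
  linarith

end goodSets

/-! ### The ball and redundancy bounds -/

section bounds

variable {ε c : ℝ} {M K : ℕ}

lemma sq_mul_le_of_le_mul_sqrt (hK : (K : ℝ) ≤ c * ε * √M) :
    (K : ℝ) ^ 2 * L ≤ c ^ 2 * ε * (ε * M * L) := by
  have hsq : (K : ℝ) ^ 2 ≤ (c * ε * √M) ^ 2 := pow_le_pow_left₀ (Nat.cast_nonneg K) hK 2
  rw [mul_pow, Real.sq_sqrt (Nat.cast_nonneg M)] at hsq
  nlinarith [mul_le_mul_of_nonneg_right hsq (Nat.cast_nonneg (α := ℝ) L)]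

lemma le_sq_mul_of_le_mul_sqrt (hε0 : 0 < ε) (hε1 : ε < 1) (hK1 : 1 ≤ K) (hL1 : 1 ≤ L)
    (hK : (K : ℝ) ≤ c * ε * √M) : (K : ℝ) ≤ c ^ 2 * (ε * M * L) := by
  have hK1' : (1 : ℝ) ≤ K := by exact_mod_cast hK1
  have hL1' : (1 : ℝ) ≤ L := by exact_mod_cast hL1
  calc (K : ℝ) ≤ K ^ 2 * L := by nlinarith
    _ ≤ c ^ 2 * ε * (ε * M * L) := sq_mul_le_of_le_mul_sqrt hK
    _ ≤ c ^ 2 * 1 * (ε * M * L) := by gcongr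
    _ = c ^ 2 * (ε * M * L) := by ring

lemma one_le_of_le_mul_sqrt (hK1 : 1 ≤ K) (hK : (K : ℝ) ≤ c * ε * √M) : 1 ≤ M := by
  by_contra! hM
  rw [Nat.lt_one_iff.1 hM, Nat.cast_zero, Real.sqrt_zero, mul_zero] at hK
  have : (1 : ℝ) ≤ K := by exact_mod_cast hK1
  linarith

lemma one_le_of_le_two_rpow (hε0 : 0 < ε) (hε1 : ε < 1) (hc1 : c < 1) (hK1 : 1 ≤ K)
    (hM : (M : ℝ) ≤ 2 ^ ((1 - ε) * L)) (hK : (K : ℝ) ≤ c * ε * √M) : 1 ≤ L := by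
  by_contra! hL
  rw [Nat.lt_one_iff.1 hL, Nat.cast_zero, mul_zero, Real.rpow_zero] at hM
  have hM1 : M = 1 := le_antisymm (by exact_mod_cast hM) (one_le_of_le_mul_sqrt hK1 hK)
  rw [hM1, Nat.cast_one, Real.sqrt_one, mul_one] at hK
  have : (1 : ℝ) ≤ K := by exact_mod_cast hK1
  nlinarith

lemma logb_le_of_le_two_rpow (hM1 : 1 ≤ M) (hM : (M : ℝ) ≤ 2 ^ ((1 - ε) * L)) :
    logb 2 M ≤ (1 - ε) * L := by
  rw [logb_le_iff_le_rpow one_lt_two (by exact_mod_cast hM1)]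
  exact hM

theorem ncard_subBall_ge (hε0 : 0 < ε) (hε1 : ε < 1) (hc0 : 0 < c) (hc1 : c < 1)
    (hM : (M : ℝ) ≤ 2 ^ ((1 - ε) * L)) (hK : (K : ℝ) ≤ c * ε * √M) {W : Finset (Word L)}
    (hW : #W = M) :
    (1 - c ^ 2) / K ^ K * realChoose (ε * M * L) K ≤ (subBall L K W).ncard := by
  have hc2 : c ^ 2 < 1 := by nlinarith
  rcases Nat.eq_zero_or_pos K with rfl | hK1
  · have hWball : W ∈ subBall L 0 W := ⟨id, by simp, by simp⟩
    have := (Set.ncard_pos (Set.toFinite _)).2 ⟨W, hWball⟩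
    have : (1 : ℝ) ≤ (subBall L 0 W).ncard := by exact_mod_cast this
    simp [realChoose]
    nlinarith
  have hM1 := one_le_of_le_mul_sqrt hK1 hK
  have hL1 := one_le_of_le_two_rpow hε0 hε1 hc1 hK1 hM hK
  have hN : ε * M * L ≤ #(boundaryEdges W) := by
    have := card_boundaryEdges_ge W
    rw [hW] at this
    nlinarith [logb_le_of_le_two_rpow hM1 hM]
  have hKL := sq_mul_le_of_le_mul_sqrt (L := L) hK
  have hK1' : (1 : ℝ) ≤ K := by exact_mod_cast hK1
  have hL1' : (1 : ℝ) ≤ L := by exact_mod_cast hL1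
  have hKLN : (K : ℝ) ^ 2 * L ≤ c ^ 2 * #(boundaryEdges W) := by
    calc (K : ℝ) ^ 2 * L ≤ c ^ 2 * ε * (ε * M * L) := hKL
      _ ≤ c ^ 2 * 1 * #(boundaryEdges W) := by gcongr
      _ = c ^ 2 * #(boundaryEdges W) := by ring
  have hN2 : 2 ≤ #(boundaryEdges W) := by
    have : (1 : ℝ) < #(boundaryEdges W) := by nlinarith
    exact_mod_cast this
  calc (1 - c ^ 2) / K ^ K * realChoose (ε * M * L) K
      ≤ (1 - c ^ 2) / K ^ K * realChoose (#(boundaryEdges W)) K := by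
        gcongr
        have := le_sq_mul_of_le_mul_sqrt hε0 hε1 hK1 hL1 hK
        exact realChoose_le_realChoose (by nlinarith) hN
    _ ≤ ((subBall L K W).ncard : ℝ) := by
        rw [realChoose_natCast]
        exact choose_card_boundaryEdges_le_ncard_subBall (c2 := c ^ 2) hK1 hL1 hN2 (by nlinarith)

lemma ncard_setOf_card_le (L M : ℕ) :
    {V : Finset (Word L) | #V ≤ M}.ncard = ∑ m ∈ range (M + 1), (2 ^ L).choose m := by
  rw [← coe_filter_univ, Set.ncard_coe_finset,
    card_eq_sum_card_fiberwise (f := card) (t := range (M + 1))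
      fun V hV => mem_range.2 (Nat.lt_succ_of_le (mem_filter.1 hV).2)]
  refine sum_congr rfl fun m hm => ?_
  have hcard : (2 ^ L).choose m = #(powersetCard m (univ : Finset (Word L))) := by
    rw [card_powersetCard]
    simp
  rw [hcard, filter_filter, powersetCard_eq_filter, powerset_univ]
  exact congrArg card (filter_congr fun V _ =>
    ⟨fun h => h.2, fun h => ⟨h ▸ Nat.le_of_lt_succ (mem_range.1 hm), h⟩⟩)

lemma card_le_of_mem_subBall {W V : Finset (Word L)} (hV : V ∈ subBall L K W) : #V ≤ #W := by
  obtain ⟨g, -, rfl⟩ := hV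
  exact card_image_le

/-- Disjoint balls around words of size `M` all lie among the sets of size at most `M`. -/
theorem card_mul_le_sum_choose {β : ℝ} {C : Finset (Finset (Word L))} (hC : ∀ W ∈ C, #W = M)
    (hdisj : ∀ W ∈ C, ∀ W' ∈ C, W ≠ W' → Disjoint (subBall L K W) (subBall L K W'))
    (hβ : ∀ W ∈ C, β ≤ (subBall L K W).ncard) :
    #C * β ≤ ((∑ m ∈ range (M + 1), (2 ^ L).choose m : ℕ) : ℝ) := by
  have hunion : ∑ W ∈ C, (subBall L K W).ncard = (⋃ W ∈ C, subBall L K W).ncard := by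
    rw [← set_biUnion_coe, C.finite_toSet.ncard_biUnion (fun _ _ => Set.toFinite _) hdisj,
      finsum_mem_coe_finset]
  have hsub : (⋃ W ∈ C, subBall L K W).ncard ≤ {V : Finset (Word L) | #V ≤ M}.ncard := by
    refine Set.ncard_le_ncard ?_ (Set.toFinite _)
    simp only [Set.iUnion_subset_iff]
    exact fun W hW V hV => (hC W hW) ▸ card_le_of_mem_subBall hV
  rw [ncard_setOf_card_le, ← hunion] at hsub
  calc #C * β = ∑ _W ∈ C, β := by rw [sum_const, nsmul_eq_mul]
    _ ≤ ∑ W ∈ C, ((subBall L K W).ncard : ℝ) := sum_le_sum hβ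
    _ ≤ _ := by exact_mod_cast hsub

lemma logb_card_le_logb_choose {C : Finset (Finset (Word L))} (hC : ∀ W ∈ C, #W = M) :
    logb 2 #C ≤ logb 2 ((2 ^ L).choose M) := by
  have hCle : #C ≤ (2 ^ L).choose M := by
    have := card_le_card (s := C) (t := powersetCard M (univ : Finset (Word L)))
      fun W hW => mem_powersetCard.2 ⟨subset_univ _, hC W hW⟩
    simpa [card_powersetCard] using this
  rcases Nat.eq_zero_or_pos #C with h | h
  · rw [h, Nat.cast_zero, logb_zero]
    exact div_nonneg (log_natCast_nonneg _) (log_nonneg one_le_two)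
  · exact logb_le_logb_of_le one_lt_two (by exact_mod_cast h) (by exact_mod_cast hCle)

lemma four_mul_le_two_pow (hM : (M : ℝ) ≤ 2 ^ ((1 - ε) * L)) (hεL : 2 ≤ ε * L) :
    4 * M ≤ 2 ^ L := by
  have h4 : (4 : ℝ) ≤ 2 ^ (ε * L) := by
    calc (4 : ℝ) = 2 ^ (2 : ℝ) := by norm_num
      _ ≤ 2 ^ (ε * L) := rpow_le_rpow_of_exponent_le one_le_two hεL
  have : (4 * M : ℝ) ≤ 2 ^ (L : ℝ) := by
    calc (4 * M : ℝ) ≤ 2 ^ (ε * L) * 2 ^ ((1 - ε) * L) := by gcongr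
      _ = 2 ^ (L : ℝ) := by rw [← rpow_add two_pos]; ring_nf
  rw [rpow_natCast] at this
  exact_mod_cast this

theorem logb_le_one_add_redundancy {β : ℝ} (h4M : 4 * M ≤ 2 ^ L) (hβ0 : 0 < β)
    (hβ : ∀ W : Finset (Word L), #W = M → β ≤ (subBall L K W).ncard)
    {C : Finset (Finset (Word L))} (hC : ∀ W ∈ C, #W = M)
    (hdisj : ∀ W ∈ C, ∀ W' ∈ C, W ≠ W' → Disjoint (subBall L K W) (subBall L K W')) :
    logb 2 β ≤ 1 + (logb 2 ((2 ^ L).choose M) - logb 2 #C) := by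
  have hsum : ∀ C' : Finset (Finset (Word L)), (∀ W ∈ C', #W = M) →
      (∀ W ∈ C', ∀ W' ∈ C', W ≠ W' → Disjoint (subBall L K W) (subBall L K W')) →
      #C' * β ≤ 2 * (2 ^ L).choose M := fun C' hC' hdisj' => by
    refine (card_mul_le_sum_choose hC' hdisj' fun W hW => hβ W (hC' W hW)).trans ?_
    exact_mod_cast Nat.sum_range_choose_le_two_mul_choose h4M
  have hchoose : (0 : ℝ) < (2 ^ L).choose M := by
    exact_mod_cast Nat.choose_pos (by omega)
  rw [← logb_self_eq_one one_lt_two, add_sub, ← logb_mul two_ne_zero hchoose.ne']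
  rcases C.eq_empty_or_nonempty with rfl | hC0
  · obtain ⟨W₀, -, hW₀⟩ := exists_subset_card_eq (s := (univ : Finset (Word L))) (n := M)
      (by simp; omega)
    have := hsum {W₀} (by simpa using hW₀) (by simp)
    rw [card_singleton, Nat.cast_one, one_mul] at this
    rw [card_empty, Nat.cast_zero, logb_zero, sub_zero]
    exact logb_le_logb_of_le one_lt_two hβ0 this
  · have hC0 : (0 : ℝ) < #C := by exact_mod_cast hC0.card_pos
    rw [le_sub_iff_add_le, ← logb_mul hβ0.ne' hC0.ne', mul_comm]
    exact logb_le_logb_of_le one_lt_two (by positivity) (hsum C hC hdisj)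

lemma logb_ge_of_le_sq_mul (hε0 : 0 < ε) (hc0 : 0 < c) (hc1 : c < 1) (hK1 : 1 ≤ K)
    (hM1 : 1 ≤ M) (hL1 : 1 ≤ L) (hKx : (K : ℝ) ≤ c ^ 2 * (ε * M * L)) :
    logb 2 (1 - c ^ 2) + K * logb 2 ((1 - c ^ 2) * ε) + K * logb 2 (M * L) - 2 * K * logb 2 K
      ≤ logb 2 ((1 - c ^ 2) / K ^ K * realChoose (ε * M * L) K) := by
  have hc2 : 0 < 1 - c ^ 2 := by nlinarith
  have hK0 : (0 : ℝ) < K := by exact_mod_cast hK1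
  have hML : (0 : ℝ) < M * L := by positivity
  set y := (1 - c ^ 2) * ε * (M * L)
  have hyK : y + K ≤ ε * M * L := by linarith
  have hB : logb 2 ((1 - c ^ 2) / K ^ K * (y / K) ^ K) = logb 2 (1 - c ^ 2) - K * logb 2 K
      + K * (logb 2 ((1 - c ^ 2) * ε) + logb 2 (M * L) - logb 2 K) := by
    rw [logb_mul (by positivity) (by positivity), logb_div hc2.ne' (by positivity), logb_pow,
      logb_pow, logb_div (by positivity) hK0.ne',
      logb_mul (x := (1 - c ^ 2) * ε) (y := M * L) (by positivity) hML.ne']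
  have hle : (1 - c ^ 2) / K ^ K * (y / K) ^ K
      ≤ (1 - c ^ 2) / K ^ K * realChoose (ε * M * L) K := by
    gcongr
    exact div_pow_le_realChoose (by positivity) hyK
  have := logb_le_logb_of_le one_lt_two (by positivity) hle
  linarith

/-- The constant of the `O(K)` term: the first entry covers `εL < 2`, where the bound is trivial,
the second absorbs the `log (1 - c²)` terms. -/
noncomputable def redundancyConst (ε c : ℝ) : ℝ :=
  max (2 / ε + logb 2 (2 / ε)) (|logb 2 ((1 - c ^ 2) * ε)| + |logb 2 (1 - c ^ 2)| + 1)

lemma logb_mul_le_of_mul_lt_two (hε0 : 0 < ε) (hM1 : 1 ≤ M) (hL1 : 1 ≤ L)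
    (hM : (M : ℝ) ≤ 2 ^ ((1 - ε) * L)) (hεL : ε * L < 2) :
    logb 2 (M * L) ≤ 2 / ε + logb 2 (2 / ε) := by
  have hL : (L : ℝ) ≤ 2 / ε := by
    rw [le_div_iff₀ hε0]
    linarith
  have hL0 : (0 : ℝ) < L := by exact_mod_cast hL1
  rw [logb_mul (by positivity) hL0.ne']
  have := logb_le_of_le_two_rpow hM1 hM
  have := logb_le_logb_of_le one_lt_two hL0 hL
  nlinarith

theorem redundancy_ge_of_two_le_mul (hε0 : 0 < ε) (hε1 : ε < 1) (hc0 : 0 < c) (hc1 : c < 1)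
    (hM : (M : ℝ) ≤ 2 ^ ((1 - ε) * L)) (hK : (K : ℝ) ≤ c * ε * √M) (hK1 : 1 ≤ K)
    (hεL : 2 ≤ ε * L) {C : Finset (Finset (Word L))} (hC : ∀ W ∈ C, #W = M)
    (hdisj : ∀ W ∈ C, ∀ W' ∈ C, W ≠ W' → Disjoint (subBall L K W) (subBall L K W')) :
    K * logb 2 (M * L) - 2 * K * logb 2 K - redundancyConst ε c * K
      ≤ logb 2 ((2 ^ L).choose M) - logb 2 #C := by
  have hM1 := one_le_of_le_mul_sqrt hK1 hK
  have hL1 := one_le_of_le_two_rpow hε0 hε1 hc1 hK1 hM hK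
  have hKx := le_sq_mul_of_le_mul_sqrt hε0 hε1 hK1 hL1 hK
  have hβ0 : 0 < (1 - c ^ 2) / K ^ K * realChoose (ε * M * L) K := by
    have hεML : 0 < ε * M * L := by
      have : (1 : ℝ) ≤ M := by exact_mod_cast hM1
      have : (1 : ℝ) ≤ L := by exact_mod_cast hL1
      positivity
    have hc2 : c ^ 2 < 1 := by nlinarith
    have := mul_lt_mul_of_pos_right hc2 hεML
    exact mul_pos (div_pos (by linarith) (by positivity)) (realChoose_pos (by linarith))
  have hlow := logb_ge_of_le_sq_mul hε0 hc0 hc1 hK1 hM1 hL1 hKx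
  have hup := logb_le_one_add_redundancy (four_mul_le_two_pow hM hεL) hβ0
    (fun W hW => ncard_subBall_ge hε0 hε1 hc0 hc1 hM hK hW) hC hdisj
  have hK0 : (0 : ℝ) ≤ K := by positivity
  have hA : (|logb 2 ((1 - c ^ 2) * ε)| + |logb 2 (1 - c ^ 2)| + 1) * K
      ≤ redundancyConst ε c * K := mul_le_mul_of_nonneg_right (le_max_right _ _) hK0
  have h₁ := mul_le_mul_of_nonneg_right (neg_abs_le (logb 2 ((1 - c ^ 2) * ε))) hK0
  have h₂ : 0 ≤ (|logb 2 (1 - c ^ 2)| + 1) * (K - 1) := by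
    have : (1 : ℝ) ≤ K := by exact_mod_cast hK1
    nlinarith [abs_nonneg (logb 2 (1 - c ^ 2))]
  have h₃ := neg_abs_le (logb 2 (1 - c ^ 2))
  nlinarith

theorem redundancy_ge (hε0 : 0 < ε) (hε1 : ε < 1) (hc0 : 0 < c) (hc1 : c < 1)
    (hM : (M : ℝ) ≤ 2 ^ ((1 - ε) * L)) (hK : (K : ℝ) ≤ c * ε * √M)
    {C : Finset (Finset (Word L))} (hC : ∀ W ∈ C, #W = M)
    (hdisj : ∀ W ∈ C, ∀ W' ∈ C, W ≠ W' → Disjoint (subBall L K W) (subBall L K W')) :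
    K * logb 2 (M * L) - 2 * K * logb 2 K - redundancyConst ε c * K
      ≤ logb 2 ((2 ^ L).choose M) - logb 2 #C := by
  rcases Nat.eq_zero_or_pos K with rfl | hK1
  · simpa using logb_card_le_logb_choose hC
  rcases le_or_gt 2 (ε * L) with hεL | hεL
  · exact redundancy_ge_of_two_le_mul hε0 hε1 hc0 hc1 hM hK hK1 hεL hC hdisj
  have hK1' : (1 : ℝ) ≤ K := by exact_mod_cast hK1
  have hlog := logb_mul_le_of_mul_lt_two hε0 (one_le_of_le_mul_sqrt hK1 hK)
    (one_le_of_le_two_rpow hε0 hε1 hc1 hK1 hM hK) hM hεL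
  have hA : (2 / ε + logb 2 (2 / ε)) * K ≤ redundancyConst ε c * K :=
    mul_le_mul_of_nonneg_right (le_max_left _ _) (by positivity)
  nlinarith [logb_nonneg one_lt_two hK1', logb_card_le_logb_choose hC]

end bounds

end SubstitutionCode

theorem stmt_13 (ε c : ℝ) (hε0 : 0 < ε) (hε1 : ε < 1) (hc0 : 0 < c) (hc1 : c < 1) :
    ∃ A : ℝ, ∀ L M K : ℕ,
      (M : ℝ) ≤ 2 ^ ((1 - ε) * L) → (K : ℝ) ≤ c * ε * Real.sqrt M →
      (∀ W : Finset (Fin L → Bool), W.card = M →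
        (1 - c ^ 2) / (K : ℝ) ^ K * realChoose (ε * M * L) K
          ≤ ((subBall L K W).ncard : ℝ)) ∧
      (∀ C : Finset (Finset (Fin L → Bool)),
        (∀ W ∈ C, W.card = M) →
        (∀ W ∈ C, ∀ W' ∈ C, W ≠ W' → Disjoint (subBall L K W) (subBall L K W')) →
        (K : ℝ) * Real.logb 2 (M * L) - 2 * K * Real.logb 2 K - A * K
          ≤ Real.logb 2 ((2 ^ L).choose M) - Real.logb 2 C.card) :=
  ⟨SubstitutionCode.redundancyConst ε c, fun _ _ _ hM hK =>
    ⟨fun _ hW => SubstitutionCode.ncard_subBall_ge hε0 hε1 hc0 hc1 hM hK hW,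
      fun _ hC hdisj => SubstitutionCode.redundancy_ge hε0 hε1 hc0 hc1 hM hK hC hdisj⟩⟩
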